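/- The triple (c,k,u) belongs to the committee election monoid M_R generated by the vectors X_R = (e_R, 1, a_R), Z_R = (e_R, 0, 0), T = (0,1,0), S_i = (0,0,−e_i) if and only if c ∈ Z_{≥0}^{|R|}, k ∈ Z_{≥0}, and u is an integral-committee-feasible utility vector in the instance (c,k). -/

import Mathlib

/-- Candidate types: non-empty subsets of the voter set `Fin n`. -/
abbrev Typ (n : ℕ) := {S : Finset (Fin n) // S.Nonempty}

/-- Utility of voter `i` under an integral committee `x`. -/
def intUtil {n : ℕ} (x : Typ n → ℕ) (i : Fin n) : ℤ :=
  ∑ R : Typ n, if i ∈ R.1 then (x R : ℤ) else 0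

/-- Utility of voter `i` under a fractional committee `x`. -/
def fracUtil {n : ℕ} (x : Typ n → ℝ) (i : Fin n) : ℝ :=
  ∑ R : Typ n, if i ∈ R.1 then x R else 0

/-- `x` is an integral committee for the instance `(c, k)`. -/
def IsIntCommittee {n : ℕ} (c : Typ n → ℕ) (k : ℕ) (x : Typ n → ℕ) : Prop :=
  (∀ R, x R ≤ c R) ∧ (∑ R : Typ n, x R) ≤ k

/-- `x` is a fractional committee for the instance `(c, k)`. -/
def IsFracCommittee {n : ℕ} (c : Typ n → ℕ) (k : ℕ) (x : Typ n → ℝ) : Prop :=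
  (∀ R, 0 ≤ x R) ∧ (∀ R, x R ≤ (c R : ℝ)) ∧ (∑ R : Typ n, x R) ≤ (k : ℝ)

/-- `u` is integral-committee-feasible in `(c, k)`. -/
def IntFeasible {n : ℕ} (c : Typ n → ℕ) (k : ℕ) (u : Fin n → ℤ) : Prop :=
  ∃ x : Typ n → ℕ, IsIntCommittee c k x ∧ ∀ i, u i ≤ intUtil x i

/-- `u` is fractional-committee-feasible in `(c, k)`. -/
def FracFeasible {n : ℕ} (c : Typ n → ℕ) (k : ℕ) (u : Fin n → ℤ) : Prop :=
  ∃ x : Typ n → ℝ, IsFracCommittee c k x ∧ ∀ i, (u i : ℝ) ≤ fracUtil x i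

/-- `(c, k)` is integralizable. -/
def Integralizable {n : ℕ} (c : Typ n → ℕ) (k : ℕ) : Prop :=
  ∀ u : Fin n → ℤ, FracFeasible c k u → IntFeasible c k u

/-- Membership of `(c, k, u)` in the committee election monoid `M_R`:
`(c,k,u)` is a non-negative integer combination of the generators
`X_R = (e_R, 1, a_R)`, `Z_R = (e_R, 0, 0)`, `T = (0,1,0)`, `S_i = (0,0,-e_i)`. -/
def InMonoid {n : ℕ} (c : Typ n → ℤ) (k : ℤ) (u : Fin n → ℤ) : Prop :=
  ∃ (x z : Typ n → ℕ) (t : ℕ) (s : Fin n → ℕ),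
    (∀ R, c R = (x R : ℤ) + (z R : ℤ)) ∧
    (k = (∑ R : Typ n, (x R : ℤ)) + (t : ℤ)) ∧
    (∀ i, u i = (∑ R : Typ n, if i ∈ R.1 then (x R : ℤ) else 0) - (s i : ℤ))

theorem Int.exists_natCast_add_eq_iff_le {a b : ℤ} : (∃ t : ℕ, b = a + t) ↔ a ≤ b :=
  ⟨fun ⟨t, ht⟩ => ht ▸ by omega, fun h => ⟨(b - a).toNat, by omega⟩⟩

theorem Int.exists_sub_natCast_eq_iff_le {a b : ℤ} : (∃ s : ℕ, b = a - s) ↔ b ≤ a :=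
  ⟨fun ⟨s, hs⟩ => hs ▸ by omega, fun h => ⟨(a - b).toNat, by omega⟩⟩

theorem exists_natCast_add_eq_iff_forall_le {ι : Type*} {a b : ι → ℤ} :
    (∃ t : ι → ℕ, ∀ i, b i = a i + t i) ↔ ∀ i, a i ≤ b i := by
  simp only [← Int.exists_natCast_add_eq_iff_le, Classical.skolem]

theorem exists_sub_natCast_eq_iff_forall_le {ι : Type*} {a b : ι → ℤ} :
    (∃ s : ι → ℕ, ∀ i, b i = a i - s i) ↔ ∀ i, b i ≤ a i := by
  simp only [← Int.exists_sub_natCast_eq_iff_le, Classical.skolem]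

/-- Each of `Z_R`, `T`, `S_i` only adds slack to one coordinate, so membership says exactly
that the `X_R`-part `x` is an integral committee meeting the utility bounds. -/
theorem inMonoid_iff_exists_committee {n : ℕ} (c : Typ n → ℤ) (k : ℤ) (u : Fin n → ℤ) :
    InMonoid c k u ↔ ∃ x : Typ n → ℕ,
      (∀ R, (x R : ℤ) ≤ c R) ∧ (∑ R, (x R : ℤ)) ≤ k ∧ ∀ i, u i ≤ intUtil x i := by
  simp only [InMonoid, intUtil, exists_and_left, exists_and_right, Int.exists_natCast_add_eq_iff_le,
    exists_natCast_add_eq_iff_forall_le, exists_sub_natCast_eq_iff_forall_le]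

theorem stmt5 (n : ℕ) (c : Typ n → ℤ) (k : ℤ) (u : Fin n → ℤ) :
    InMonoid c k u ↔
      ((∀ R, 0 ≤ c R) ∧ 0 ≤ k ∧
        ∃ x : Typ n → ℕ,
          (∀ R, (x R : ℤ) ≤ c R) ∧ ((∑ R : Typ n, (x R : ℤ)) ≤ k) ∧
          ∀ i, u i ≤ ∑ R : Typ n, if i ∈ R.1 then (x R : ℤ) else 0) := by
  rw [inMonoid_iff_exists_committee]
  refine ⟨fun ⟨x, hc, hk, hu⟩ => ⟨fun R => ?_, ?_, x, hc, hk, hu⟩, fun h => h.2.2⟩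
  · exact (Int.natCast_nonneg _).trans (hc R)
  · exact (Finset.sum_nonneg fun R _ => Int.natCast_nonneg (x R)).trans hk
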